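/- arXiv:1005.4348 — 7 statements merged into one kernel-verified Lean document; each statement's English description precedes it below -/
import Mathlib

section
/- Let ρ be a positive semidefinite d_A·d_B × d_A·d_B complex matrix that is generalized-classical with respect to the second party, i.e. ρ = Σ_{m=1}^n ρ_m ⊗ (b_m b_m†) (Kronecker product) for some linearly independent vectors b_1, …, b_n ∈ ℂ^{d_B} and positive semidefinite d_A × d_A matrices ρ_1, …, ρ_n. Then, with r = rank ρ, there exist vectors u_1, …, u_r ∈ ℂ^{d_A} and v_1, …, v_r ∈ ℂ^{d_B} such that the product vectors u_k ⊗ v_k (Kronecker/tensor product of vectors) for k = 1, …, r are linearly independent and ρ = Σ_{k=1}^r (u_k ⊗ v_k)(u_k ⊗ v_k)†. -/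
open Matrix
open scoped Kronecker ComplexOrder

/-- The outer product `v v†` of a vector with itself. -/
def outer {n : Type*} (v : n → ℂ) : Matrix n n ℂ :=
  Matrix.vecMulVec v (star v)

/-- The Kronecker (tensor) product of two vectors. -/
def kronVec {m n : Type*} (u : m → ℂ) (v : n → ℂ) : m × n → ℂ :=
  fun p => u p.1 * v p.2

/-!
Each `ρ m`, being positive semidefinite, is the sum of the outer products of its eigenvectors
for nonzero eigenvalues, scaled by the square roots of those eigenvalues; these `rank (ρ m)`
vectors `w m k` are linearly independent. Substituting, `ρ = ∑ (w m k ⊗ b m)(w m k ⊗ b m)†`, and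
the product vectors `w m k ⊗ b m` are linearly independent because the `b m` are. Finally
`∑ₖ vₖ vₖ† = V V†` has the rank of `V`, which for linearly independent columns is their number,
so the number of terms is `rank ρ`.
-/

variable {α β ι : Type*}

lemma sum_outer_eq_mul_conjTranspose [Fintype ι] (v : ι → α → ℂ) :
    ∑ k, outer (v k) = of (fun i k => v k i) * (of fun i k => v k i)ᴴ := by
  ext i j
  simp [outer, vecMulVec, mul_apply, Matrix.sum_apply]

lemma rank_sum_outer_of_linearIndependent [Fintype α] [Fintype ι] {v : ι → α → ℂ}
    (hv : LinearIndependent ℂ v) :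
    (∑ k, outer (v k)).rank = Fintype.card ι := by
  rw [sum_outer_eq_mul_conjTranspose, rank_self_mul_conjTranspose, rank_eq_finrank_span_cols]
  exact finrank_span_eq_card hv

lemma nonempty_fin_rank_equiv_of_eq_sum_outer [Fintype α] [Fintype ι] {M : Matrix α α ℂ}
    {v : ι → α → ℂ} (hv : LinearIndependent ℂ v) (hM : M = ∑ k, outer (v k)) :
    Nonempty (Fin M.rank ≃ ι) :=
  ⟨Fintype.equivOfCardEq <| by rw [Fintype.card_fin, hM, rank_sum_outer_of_linearIndependent hv]⟩

lemma outer_kronecker_outer (u : α → ℂ) (v : β → ℂ) :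
    outer u ⊗ₖ outer v = outer (kronVec u v) := by
  ext p q
  simp only [kroneckerMap_apply, outer, vecMulVec_apply, Pi.star_apply, kronVec, star_mul']
  ring

lemma sum_outer_kronecker_outer [Fintype ι] (w : ι → α → ℂ) (v : β → ℂ) :
    (∑ k, outer (w k)) ⊗ₖ outer v = ∑ k, outer (kronVec (w k) v) := by
  simp only [← outer_kronecker_outer]
  ext p q
  simp [Matrix.sum_apply, Finset.sum_mul]

lemma linearIndependent_sigma_kronVec {κ : Type*} [Fintype κ] {σ : κ → Type*}
    [∀ m, Fintype (σ m)] {b : κ → β → ℂ} (hb : LinearIndependent ℂ b)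
    {u : (m : κ) → σ m → α → ℂ} (hu : ∀ m, LinearIndependent ℂ (u m)) :
    LinearIndependent ℂ (fun p : Σ m, σ m => kronVec (u p.1 p.2) (b p.1)) := by
  rw [Fintype.linearIndependent_iff] at hb ⊢
  intro g hg p
  -- read at `(a, ·)`, a vanishing combination of the product vectors is one of the `b m`
  have hcoeff : ∀ m a, ∑ j, g ⟨m, j⟩ * u m j a = 0 := by
    intro m a
    refine hb (fun m => ∑ j, g ⟨m, j⟩ * u m j a) (funext fun y => ?_) m
    have := congrFun hg (a, y)
    simp only [Finset.sum_apply, Pi.smul_apply, smul_eq_mul, kronVec, Pi.zero_apply,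
      Fintype.sum_sigma] at this ⊢
    simpa [Finset.sum_mul, mul_assoc] using this
  exact Fintype.linearIndependent_iff.mp (hu p.1) (fun j => g ⟨p.1, j⟩)
    (funext fun a => by simpa [Finset.sum_apply] using hcoeff p.1 a) p.2

lemma Matrix.PosSemidef.eq_sum_outer_eigenvectors [Fintype α] [DecidableEq α]
    {M : Matrix α α ℂ} (hM : M.PosSemidef) :
    M = ∑ k, outer ((√(hM.1.eigenvalues k) : ℂ) • ⇑(hM.1.eigenvectorBasis k)) := by
  set U : Matrix α α ℂ := (hM.1.eigenvectorUnitary : Matrix α α ℂ)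
  set D : Matrix α α ℂ := diagonal fun k => (√(hM.1.eigenvalues k) : ℂ)
  have hD : D * Dᴴ = diagonal (RCLike.ofReal ∘ hM.1.eigenvalues) := by
    rw [diagonal_conjTranspose, diagonal_mul_diagonal]
    congr 1
    ext k
    simp [← Complex.ofReal_mul, Real.mul_self_sqrt (hM.eigenvalues_nonneg k)]
  have hcols : (of fun i k => ((√(hM.1.eigenvalues k) : ℂ) • ⇑(hM.1.eigenvectorBasis k)) i) =
      U * D := by
    ext i k
    simp [U, D, IsHermitian.eigenvectorUnitary_apply, mul_comm]
  calc M = U * (D * Dᴴ) * Uᴴ := by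
        rw [hD, ← star_eq_conjTranspose]
        exact hM.1.spectral_theorem
    _ = _ := by
        rw [sum_outer_eq_mul_conjTranspose, hcols, conjTranspose_mul]
        simp only [Matrix.mul_assoc]

lemma Matrix.PosSemidef.exists_linearIndependent_eq_sum_outer [Fintype α] [DecidableEq α]
    {M : Matrix α α ℂ} (hM : M.PosSemidef) :
    ∃ w : Fin M.rank → α → ℂ, LinearIndependent ℂ w ∧ M = ∑ k, outer (w k) := by
  set w : α → α → ℂ := fun k => (√(hM.1.eigenvalues k) : ℂ) • ⇑(hM.1.eigenvectorBasis k)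
  let S := {k // hM.1.eigenvalues k ≠ 0}
  have hind : LinearIndependent ℂ fun k : S => w k := by
    have heig : LinearIndependent ℂ fun k => ⇑(hM.1.eigenvectorBasis k) :=
      hM.1.eigenvectorBasis.toBasis.linearIndependent.map'
        (WithLp.linearEquiv 2 ℂ (α → ℂ)).toLinearMap (LinearEquiv.ker _)
    refine (heig.comp Subtype.val Subtype.val_injective).units_smul fun k =>
      Units.mk0 _ ?_
    exact Complex.ofReal_ne_zero.mpr <|
      Real.sqrt_ne_zero'.mpr ((hM.eigenvalues_nonneg k).lt_of_ne' k.2)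
  have hsum : M = ∑ k : S, outer (w k) := by
    rw [← Finset.sum_subtype {k | hM.1.eigenvalues k ≠ 0} (by simp) (fun k => outer (w k)),
      Finset.sum_filter_of_ne fun k _ hk => ?_]
    · exact hM.eq_sum_outer_eigenvectors
    · contrapose! hk
      simp [w, hk, outer]
  obtain ⟨e⟩ := nonempty_fin_rank_equiv_of_eq_sum_outer hind hsum
  exact ⟨fun k => w (e k), hind.comp e e.injective, hsum.trans (e.sum_comp _).symm⟩

theorem genClassical_is_minimal_length_general
    {dA dB n : ℕ}
    (ρ : Matrix (Fin dA × Fin dB) (Fin dA × Fin dB) ℂ)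
    (b : Fin n → (Fin dB → ℂ)) (hb : LinearIndependent ℂ b)
    (ρm : Fin n → Matrix (Fin dA) (Fin dA) ℂ)
    (hρm : ∀ m, (ρm m).PosSemidef)
    (hdecomp : ρ = ∑ m, ρm m ⊗ₖ outer (b m)) :
    ∃ (u : Fin ρ.rank → (Fin dA → ℂ)) (v : Fin ρ.rank → (Fin dB → ℂ)),
      LinearIndependent ℂ (fun k => kronVec (u k) (v k)) ∧
      ρ = ∑ k, outer (kronVec (u k) (v k)) := by
  choose w hw_indep hw_sum using fun m => (hρm m).exists_linearIndependent_eq_sum_outer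
  set f : (Σ m, Fin (ρm m).rank) → Fin dA × Fin dB → ℂ := fun p => kronVec (w p.1 p.2) (b p.1)
  have hf : LinearIndependent ℂ f := linearIndependent_sigma_kronVec hb hw_indep
  have hρf : ρ = ∑ p, outer (f p) := by
    rw [hdecomp, Fintype.sum_sigma]
    refine Finset.sum_congr rfl fun m _ => ?_
    conv_lhs => rw [hw_sum m]
    exact sum_outer_kronecker_outer _ _
  obtain ⟨e⟩ := nonempty_fin_rank_equiv_of_eq_sum_outer hf hρf
  exact ⟨fun k => w (e k).1 (e k).2, fun k => b (e k).1, hf.comp e e.injective,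
    hρf.trans (e.sum_comp _).symm⟩

/-- A bipartite state which is generalized-classical with respect to the
second party is a minimal length separable state. -/
theorem genClassical_is_minimal_length
    {dA dB n : ℕ}
    (ρ : Matrix (Fin dA × Fin dB) (Fin dA × Fin dB) ℂ)
    (hρ : ρ.PosSemidef)
    (b : Fin n → (Fin dB → ℂ)) (hb : LinearIndependent ℂ b)
    (ρm : Fin n → Matrix (Fin dA) (Fin dA) ℂ)
    (hρm : ∀ m, (ρm m).PosSemidef)
    (hdecomp : ρ = ∑ m, ρm m ⊗ₖ outer (b m)) :
    ∃ (u : Fin ρ.rank → (Fin dA → ℂ)) (v : Fin ρ.rank → (Fin dB → ℂ)),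
      LinearIndependent ℂ (fun k => kronVec (u k) (v k)) ∧
      ρ = ∑ k, outer (kronVec (u k) (v k)) :=
  genClassical_is_minimal_length_general ρ b hb ρm hρm hdecomp
end

section
/- Let ρ be a d_A·d_B × d_A·d_B complex matrix such that ρ = Σ_{i=1}^n R_i ⊗ (b_i b_i†) for some linearly independent vectors b_1, …, b_n ∈ ℂ^{d_B} and positive semidefinite d_A × d_A matrices R_i, and also ρ = Σ_{j=1}^m (a_j a_j†) ⊗ S_j for some linearly independent vectors a_1, …, a_m ∈ ℂ^{d_A} and positive semidefinite d_B × d_B matrices S_j. Then there exist nonnegative real numbers c_{j i} such that ρ = Σ_{j=1}^m Σ_{i=1}^n c_{j i} · (a_j ⊗ b_i)(a_j ⊗ b_i)†. -/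
open Matrix
open scoped Kronecker ComplexOrder

theorem LinearIndependent.exists_leftInverse_mulVec {K ι κ : Type*} [Field K] [Fintype ι]
    [Fintype κ] [DecidableEq ι] {b : ι → κ → K} (hb : LinearIndependent K b) :
    ∃ D : Matrix ι κ K, ∀ i, D *ᵥ b i = Pi.single i 1 := by
  classical
  obtain ⟨g, hg⟩ := (Fintype.linearCombination K b).exists_leftInverse_of_injective
    (LinearMap.ker_eq_bot.mpr (linearIndependent_iff_injective_fintypeLinearCombination.mp hb))
  refine ⟨LinearMap.toMatrix' g, fun i => ?_⟩
  simpa [LinearMap.toMatrix'_mulVec] using LinearMap.congr_fun hg (Pi.single i 1)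

section

variable {α β R : Type*} [Fintype β] [CommSemiring R] [Star R]

/-- `(1 ⊗ w)† M (1 ⊗ w)`, with `α × Unit` identified with `α`. -/
def compressRight (w : β → R) : Matrix (α × β) (α × β) R →ₗ[R] Matrix α α R where
  toFun M := Matrix.of fun x y => star w ⬝ᵥ M.submatrix (x, ·) (y, ·) *ᵥ w
  map_add' M N := by
    ext x y
    simp [submatrix_add, add_mulVec]
  map_smul' c M := by
    ext x y
    simp [submatrix_smul, smul_mulVec]

theorem compressRight_kronecker (w : β → R) (X : Matrix α α R) (Y : Matrix β β R) :
    compressRight w (X ⊗ₖ Y) = (star w ⬝ᵥ Y *ᵥ w) • X := by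
  ext x y
  have : (X ⊗ₖ Y).submatrix (x, ·) (y, ·) = X x y • Y := by ext; simp
  simp [compressRight, this, smul_mulVec, mul_comm]

end

theorem dotProduct_outer_mulVec_star {β : Type*} [Fintype β] (u v : β → ℂ) :
    v ⬝ᵥ outer u *ᵥ star v = (v ⬝ᵥ u) * star (v ⬝ᵥ u) := by
  simp [outer, vecMulVec_mulVec, star_dotProduct_star, mul_comm]

theorem outer_kronVec {α β : Type*} (u : α → ℂ) (v : β → ℂ) :
    outer (kronVec u v) = outer u ⊗ₖ outer v := by
  ext ⟨x, p⟩ ⟨y, q⟩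
  simp [outer, kronVec, vecMulVec_apply]
  ring

theorem Matrix.sum_kronecker {ι l m n p R : Type*} [CommSemiring R] (s : Finset ι)
    (X : ι → Matrix l m R) (Y : Matrix n p R) :
    (∑ j ∈ s, X j) ⊗ₖ Y = ∑ j ∈ s, X j ⊗ₖ Y := by
  ext
  simp [Matrix.sum_apply, Finset.sum_mul]

section

variable {α β ι κ : Type*} [Fintype β] [Fintype ι]

theorem compressRight_sum_kronecker_outer [DecidableEq ι] {D : Matrix ι β ℂ} {b : ι → β → ℂ}
    (hD : ∀ i, D *ᵥ b i = Pi.single i 1) (R : ι → Matrix α α ℂ) (k : ι) :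
    compressRight (star (D k)) (∑ i, R i ⊗ₖ outer (b i)) = R k := by
  have hDb : ∀ i, D k ⬝ᵥ b i = (Pi.single i 1 : ι → ℂ) k := fun i => congr_fun (hD i) k
  simp [compressRight_kronecker, dotProduct_outer_mulVec_star, hDb, Pi.single_apply]

theorem exists_nonneg_coeff_of_sum_kronecker_outer_eq [Fintype κ] {b : ι → β → ℂ}
    (hb : LinearIndependent ℂ b) {R : ι → Matrix α α ℂ} {a : κ → α → ℂ}
    {S : κ → Matrix β β ℂ} (hS : ∀ j, (S j).PosSemidef)
    (h : ∑ i, R i ⊗ₖ outer (b i) = ∑ j, outer (a j) ⊗ₖ S j) :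
    ∃ c : κ → ι → ℝ, (∀ j i, 0 ≤ c j i) ∧ ∀ i, R i = ∑ j, (c j i : ℂ) • outer (a j) := by
  classical
  obtain ⟨D, hD⟩ := hb.exists_leftInverse_mulVec
  choose c hc hcq using fun j i =>
    RCLike.nonneg_iff_exists_ofReal.mp ((hS j).dotProduct_mulVec_nonneg (star (D i)))
  refine ⟨c, hc, fun i => ?_⟩
  rw [← compressRight_sum_kronecker_outer hD R i, h, map_sum]
  simp only [compressRight_kronecker, ← hcq, RCLike.ofReal_eq_complex_ofReal]

end

theorem genClassical_both_parties_is_fully_genClassical_general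
    {dA dB n m : ℕ}
    (ρ : Matrix (Fin dA × Fin dB) (Fin dA × Fin dB) ℂ)
    (b : Fin n → (Fin dB → ℂ)) (hb : LinearIndependent ℂ b)
    (R : Fin n → Matrix (Fin dA) (Fin dA) ℂ)
    (hB : ρ = ∑ i, R i ⊗ₖ outer (b i))
    (a : Fin m → (Fin dA → ℂ))
    (S : Fin m → Matrix (Fin dB) (Fin dB) ℂ) (hS : ∀ j, (S j).PosSemidef)
    (hA : ρ = ∑ j, outer (a j) ⊗ₖ S j) :
    ∃ c : Fin m → Fin n → ℝ, (∀ j i, 0 ≤ c j i) ∧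
      ρ = ∑ j, ∑ i, (c j i : ℂ) • outer (kronVec (a j) (b i)) := by
  obtain ⟨c, hc, hRc⟩ := exists_nonneg_coeff_of_sum_kronecker_outer_eq hb hS (hB.symm.trans hA)
  refine ⟨c, hc, ?_⟩
  calc ρ = ∑ i, (∑ j, (c j i : ℂ) • outer (a j)) ⊗ₖ outer (b i) := by simp only [hB, ← hRc]
    _ = ∑ j, ∑ i, (c j i : ℂ) • outer (kronVec (a j) (b i)) := by
      simp only [sum_kronecker, smul_kronecker, outer_kronVec]
      exact Finset.sum_comm

/-- Lemma 2, bipartite generalized-classical case: a state that is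
generalized-classical for both parties is fully generalized-classical. -/
theorem genClassical_both_parties_is_fully_genClassical
    {dA dB n m : ℕ}
    (ρ : Matrix (Fin dA × Fin dB) (Fin dA × Fin dB) ℂ)
    (b : Fin n → (Fin dB → ℂ)) (hb : LinearIndependent ℂ b)
    (R : Fin n → Matrix (Fin dA) (Fin dA) ℂ) (hR : ∀ i, (R i).PosSemidef)
    (hB : ρ = ∑ i, R i ⊗ₖ outer (b i))
    (a : Fin m → (Fin dA → ℂ)) (ha : LinearIndependent ℂ a)
    (S : Fin m → Matrix (Fin dB) (Fin dB) ℂ) (hS : ∀ j, (S j).PosSemidef)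
    (hA : ρ = ∑ j, outer (a j) ⊗ₖ S j) :
    ∃ c : Fin m → Fin n → ℝ, (∀ j i, 0 ≤ c j i) ∧
      ρ = ∑ j, ∑ i, (c j i : ℂ) • outer (kronVec (a j) (b i)) :=
  genClassical_both_parties_is_fully_genClassical_general ρ b hb R hB a S hS hA
end

section
/- Let ρ be a positive semidefinite d_A·d_B × d_A·d_B complex matrix, viewed as a d_A × d_A block matrix with d_B × d_B blocks ρ^B_{ij}. Then the following are equivalent: (1) there exist linearly independent vectors b_1, …, b_n ∈ ℂ^{d_B} and positive semidefinite d_A × d_A matrices ρ_1, …, ρ_n such that ρ = Σ_{m=1}^n ρ_m ⊗ (b_m b_m†); (2) there exist linearly independent vectors b_1, …, b_n ∈ ℂ^{d_B} and complex numbers c_{i j m} such that for all i, j one has ρ^B_{ij} = Σ_{m=1}^n c_{i j m} · (b_m b_m†). -/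
open Matrix
open scoped Kronecker ComplexOrder

/-- The `(i,j)` block (of size `dB × dB`) of a bipartite matrix on
`ℂ^{dA} ⊗ ℂ^{dB}`. -/
def blockB {dA dB : ℕ} (ρ : Matrix (Fin dA × Fin dB) (Fin dA × Fin dB) ℂ)
    (i j : Fin dA) : Matrix (Fin dB) (Fin dB) ℂ :=
  Matrix.of fun k l => ρ (i, k) (j, l)

/-! Take `c i j m = ρ_m i j`; the block condition then says exactly `ρ = ∑ ρ_m ⊗ b_m b_m†`.
Linear independence gives a dual family `u_m` with `b_k† u_m = δ_{km}`, and then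
`ρ_m = (I ⊗ u_m)† ρ (I ⊗ u_m)` is a compression of `ρ`, hence positive semidefinite. -/

theorem LinearIndependent.exists_dotProduct_eq_one_apply {K ι d : Type*} [Field K] [Fintype ι]
    [DecidableEq ι] [Fintype d] {b : ι → d → K} (hb : LinearIndependent K b) :
    ∃ a : ι → d → K, ∀ m k, a m ⬝ᵥ b k = (1 : Matrix ι ι K) m k := by
  classical
  obtain ⟨S, hS⟩ := (Fintype.linearCombination K b).exists_leftInverse_of_injective
    (LinearMap.ker_eq_bot.mpr (linearIndependent_iff_injective_fintypeLinearCombination.mp hb))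
  refine ⟨LinearMap.toMatrix' S, fun m k => ?_⟩
  have hSb : S (b k) = Pi.single k 1 := by
    simpa [Fintype.linearCombination_apply_single] using LinearMap.congr_fun hS (Pi.single k 1)
  change (LinearMap.toMatrix' S *ᵥ b k) m = _
  rw [LinearMap.toMatrix'_mulVec, hSb, one_apply, Pi.single_apply]

theorem eq_sum_kronecker_iff_blockB {dA dB : ℕ} {ι : Type*} [Fintype ι]
    (ρ : Matrix (Fin dA × Fin dB) (Fin dA × Fin dB) ℂ) (A : ι → Matrix (Fin dA) (Fin dA) ℂ)
    (B : ι → Matrix (Fin dB) (Fin dB) ℂ) :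
    ρ = ∑ m, A m ⊗ₖ B m ↔ ∀ i j, blockB ρ i j = ∑ m, A m i j • B m := by
  constructor
  · rintro rfl i j
    ext k l
    simp [blockB, Matrix.sum_apply]
  · intro h
    ext ⟨i, k⟩ ⟨j, l⟩
    simpa [blockB, Matrix.sum_apply] using congr_fun (congr_fun (h i j) k) l

/-- The matrix of `I ⊗ |w⟩ : ℂ^α → ℂ^α ⊗ ℂ^β`. -/
def oneKroneckerVec (α : Type*) {β : Type*} [DecidableEq α] (w : β → ℂ) :
    Matrix (α × β) α ℂ :=
  of fun p j => (1 : Matrix α α ℂ) p.1 j * w p.2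

theorem conjTranspose_oneKroneckerVec_mul_mul {dA dB : ℕ}
    (ρ : Matrix (Fin dA × Fin dB) (Fin dA × Fin dB) ℂ) (w : Fin dB → ℂ) :
    (oneKroneckerVec (Fin dA) w)ᴴ * ρ * oneKroneckerVec (Fin dA) w =
      of fun i j => star w ⬝ᵥ (blockB ρ i j *ᵥ w) := by
  ext i j
  simp only [mul_apply, conjTranspose_apply, oneKroneckerVec, of_apply, Fintype.sum_prod_type,
    star_mul', blockB, dotProduct, mulVec, Finset.sum_mul, Finset.mul_sum]
  simp only [one_apply, RCLike.star_def, MonoidWithZeroHom.map_ite_one_zero, ite_mul, one_mul,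
    zero_mul, mul_ite, mul_assoc, mul_left_comm, mul_zero, Finset.sum_ite_irrel,
    Finset.sum_const_zero, Finset.sum_ite_eq', Finset.mem_univ, ↓reduceIte, Pi.star_apply]
  exact Finset.sum_comm

theorem Matrix.PosSemidef.compressB {dA dB : ℕ}
    {ρ : Matrix (Fin dA × Fin dB) (Fin dA × Fin dB) ℂ} (hρ : ρ.PosSemidef) (w : Fin dB → ℂ) :
    (of fun i j => star w ⬝ᵥ (blockB ρ i j *ᵥ w)).PosSemidef := by
  rw [← conjTranspose_oneKroneckerVec_mul_mul]
  exact hρ.conjTranspose_mul_mul_same _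

theorem star_dotProduct_outer_mulVec {n : Type*} [Fintype n] (v w : n → ℂ) :
    star w ⬝ᵥ (outer v *ᵥ w) = star (star v ⬝ᵥ w) * (star v ⬝ᵥ w) := by
  rw [outer, vecMulVec_mulVec, dotProduct_smul, op_smul_eq_mul, star_dotProduct]

theorem star_dotProduct_sum_smul_outer_mulVec {n ι : Type*} [Fintype n] [Fintype ι]
    [DecidableEq ι] (b : ι → n → ℂ) (c : ι → ℂ) {w : n → ℂ} {m : ι}
    (hw : ∀ k, star (b k) ⬝ᵥ w = (1 : Matrix ι ι ℂ) k m) :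
    star w ⬝ᵥ ((∑ k, c k • outer (b k)) *ᵥ w) = c m := by
  simp [sum_mulVec, dotProduct_sum, smul_mulVec, star_dotProduct_outer_mulVec, hw, one_apply]

/-- Theorem 1, generalized-classical case: a positive semidefinite bipartite
matrix is generalized-classical with respect to the second party iff all of
its blocks are simultaneously "diagonal" in a common linearly independent
family `{b_m}`, i.e. linear combinations of the `b_m b_m†`. -/
theorem genClassical_iff_blocks_diagonal
    {dA dB : ℕ}
    (ρ : Matrix (Fin dA × Fin dB) (Fin dA × Fin dB) ℂ)
    (hρ : ρ.PosSemidef) :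
    (∃ (n : ℕ) (b : Fin n → (Fin dB → ℂ))
        (ρm : Fin n → Matrix (Fin dA) (Fin dA) ℂ),
      LinearIndependent ℂ b ∧ (∀ m, (ρm m).PosSemidef) ∧
      ρ = ∑ m, ρm m ⊗ₖ outer (b m)) ↔
    (∃ (n : ℕ) (b : Fin n → (Fin dB → ℂ)) (c : Fin dA → Fin dA → Fin n → ℂ),
      LinearIndependent ℂ b ∧
      ∀ i j, blockB ρ i j = ∑ m, c i j m • outer (b m)) := by
  constructor
  · rintro ⟨n, b, ρm, hb, -, hρm⟩
    exact ⟨n, b, fun i j m => ρm m i j, hb, (eq_sum_kronecker_iff_blockB ρ ρm _).1 hρm⟩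
  · rintro ⟨n, b, c, hb, hblocks⟩
    obtain ⟨a, ha⟩ := hb.exists_dotProduct_eq_one_apply
    have hdual : ∀ m k, star (b k) ⬝ᵥ star (a m) = (1 : Matrix (Fin n) (Fin n) ℂ) k m := by
      intro m k
      rw [star_dotProduct_star, ha, ← conjTranspose_apply, conjTranspose_one]
    refine ⟨n, b, fun m => of fun i j => c i j m, hb, fun m => ?_,
      (eq_sum_kronecker_iff_blockB ρ _ _).2 hblocks⟩
    dsimp only
    have hcompress : (of fun i j => star (star (a m)) ⬝ᵥ (blockB ρ i j *ᵥ star (a m))) =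
        of fun i j => c i j m := by
      ext i j
      rw [of_apply, of_apply, hblocks, star_dotProduct_sum_smul_outer_mulVec b _ (hdual m)]
    exact hcompress ▸ hρ.compressB (star (a m))
end

section
/- Let ρ be a positive semidefinite d_A·d_B × d_A·d_B complex matrix, viewed as a d_A × d_A block matrix with d_B × d_B blocks ρ^B_{ij}. Then the following are equivalent: (1) there exist orthonormal vectors b_1, …, b_n ∈ ℂ^{d_B} and positive semidefinite d_A × d_A matrices ρ_1, …, ρ_n such that ρ = Σ_{m=1}^n ρ_m ⊗ (b_m b_m†); (2) there exist orthonormal vectors b_1, …, b_n ∈ ℂ^{d_B} and complex numbers c_{i j m} such that for all i, j one has ρ^B_{ij} = Σ_{m=1}^n c_{i j m} · (b_m b_m†). -/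
/-!
(1) ⇒ (2) is read off blockwise: the `(i,j)` block of `∑ ρ_m ⊗ b_m b_m†` is `∑ (ρ_m)_{ij} b_m b_m†`.
Conversely, (2) says exactly that `ρ = ∑ C_m ⊗ b_m b_m†` with `(C_m)_{ij} = c_{ijm}`. Compressing
by the isometry `I ⊗ b_m` picks out `C_m = (I ⊗ b_m)† ρ (I ⊗ b_m)`, by orthonormality of the `b_k`,
and a compression of a positive semidefinite matrix is positive semidefinite.
-/

open Matrix
open scoped Kronecker ComplexOrder

section Blocks

variable {dA dB : ℕ}

theorem ext_blockB {ρ σ : Matrix (Fin dA × Fin dB) (Fin dA × Fin dB) ℂ}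
    (h : ∀ i j, blockB ρ i j = blockB σ i j) : ρ = σ := by
  ext ⟨i, k⟩ ⟨j, l⟩
  exact congrFun₂ (h i j) k l

theorem blockB_sum_kronecker {n : Type*} [Fintype n] (A : n → Matrix (Fin dA) (Fin dA) ℂ)
    (B : n → Matrix (Fin dB) (Fin dB) ℂ) (i j : Fin dA) :
    blockB (∑ m, A m ⊗ₖ B m) i j = ∑ m, A m i j • B m := by
  ext k l
  simp [blockB, Matrix.sum_apply]

end Blocks

section Compression

variable {ι κ : Type*} [Fintype ι] [Fintype κ] [DecidableEq ι]

theorem dotProduct_outer_mulVec (v w : κ → ℂ) :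
    star w ⬝ᵥ (outer v *ᵥ w) = (star w ⬝ᵥ v) * (star v ⬝ᵥ w) := by
  rw [outer, vecMulVec_mulVec, op_smul_eq_smul, dotProduct_smul, smul_eq_mul, mul_comm]

variable (ι) in
/-- The matrix of `I ⊗ v : ℂ^ι → ℂ^ι ⊗ ℂ^κ`, `x ↦ x ⊗ v`. -/
def idKroneckerVec (v : κ → ℂ) : Matrix (ι × κ) ι ℂ :=
  of fun p j => (1 : Matrix ι ι ℂ) p.1 j * v p.2

theorem conjTranspose_idKroneckerVec_mul_kronecker_mul (A : Matrix ι ι ℂ) (B : Matrix κ κ ℂ)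
    (v : κ → ℂ) :
    (idKroneckerVec ι v)ᴴ * (A ⊗ₖ B) * idKroneckerVec ι v = (star v ⬝ᵥ (B *ᵥ v)) • A := by
  ext i j
  simp only [idKroneckerVec, one_apply, ite_mul, one_mul, zero_mul, mul_apply,
    conjTranspose_apply, of_apply, RCLike.star_def, apply_ite (starRingEnd ℂ), map_zero,
    kroneckerMap_apply, Fintype.sum_prod_type, Finset.sum_ite_irrel, Finset.sum_const_zero,
    Finset.sum_ite_eq', Finset.mem_univ, ↓reduceIte, mul_ite, Finset.sum_mul, mul_zero,
    dotProduct, Pi.star_apply, mulVec, Finset.mul_sum, Matrix.smul_apply, smul_eq_mul]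
  rw [Finset.sum_comm]
  refine Finset.sum_congr rfl fun k _ => Finset.sum_congr rfl fun l _ => ?_
  ring

variable {n : Type*} [Fintype n] [DecidableEq n] {b : n → κ → ℂ}

theorem conjTranspose_idKroneckerVec_mul_sum_kronecker_outer_mul
    (hb : ∀ k l, star (b k) ⬝ᵥ b l = if k = l then 1 else 0) (C : n → Matrix ι ι ℂ) (m : n) :
    (idKroneckerVec ι (b m))ᴴ * (∑ k, C k ⊗ₖ outer (b k)) * idKroneckerVec ι (b m) = C m := by
  simp only [Matrix.mul_sum, Matrix.sum_mul, conjTranspose_idKroneckerVec_mul_kronecker_mul,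
    dotProduct_outer_mulVec, hb]
  simp

theorem Matrix.PosSemidef.of_sum_kronecker_outer
    (hb : ∀ k l, star (b k) ⬝ᵥ b l = if k = l then 1 else 0) {C : n → Matrix ι ι ℂ}
    (hC : (∑ k, C k ⊗ₖ outer (b k)).PosSemidef) (m : n) : (C m).PosSemidef := by
  rw [← conjTranspose_idKroneckerVec_mul_sum_kronecker_outer_mul hb C m]
  exact hC.conjTranspose_mul_mul_same _

end Compression

/-- Theorem 1, classical case: a positive semidefinite bipartite matrix is
classical with respect to the second party iff all of its blocks are
simultaneously diagonal in a common orthonormal family `{b_m}`. -/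
theorem classical_iff_blocks_diagonal
    {dA dB : ℕ}
    (ρ : Matrix (Fin dA × Fin dB) (Fin dA × Fin dB) ℂ)
    (hρ : ρ.PosSemidef) :
    (∃ (n : ℕ) (b : Fin n → (Fin dB → ℂ))
        (ρm : Fin n → Matrix (Fin dA) (Fin dA) ℂ),
      (∀ k l, star (b k) ⬝ᵥ b l = if k = l then 1 else 0) ∧
      (∀ m, (ρm m).PosSemidef) ∧
      ρ = ∑ m, ρm m ⊗ₖ outer (b m)) ↔
    (∃ (n : ℕ) (b : Fin n → (Fin dB → ℂ)) (c : Fin dA → Fin dA → Fin n → ℂ),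
      (∀ k l, star (b k) ⬝ᵥ b l = if k = l then 1 else 0) ∧
      ∀ i j, blockB ρ i j = ∑ m, c i j m • outer (b m)) := by
  constructor
  · rintro ⟨n, b, ρm, hb, -, rfl⟩
    exact ⟨n, b, fun i j m => ρm m i j, hb, blockB_sum_kronecker ρm _⟩
  · rintro ⟨n, b, c, hb, hblock⟩
    let C : Fin n → Matrix (Fin dA) (Fin dA) ℂ := fun m => of fun i j => c i j m
    have hρC : ρ = ∑ m, C m ⊗ₖ outer (b m) :=
      ext_blockB fun i j => by rw [hblock, blockB_sum_kronecker]; rfl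
    subst hρC
    exact ⟨n, b, C, hb, hρ.of_sum_kronecker_outer hb, rfl⟩
end

section
/- Let A_1, …, A_m be Hermitian n × n complex matrices. Then there exists an invertible n × n complex matrix P such that P A_i P† is a diagonal matrix for every i = 1, …, m, if and only if there exists a Hermitian n × n matrix W with W − I positive semidefinite such that A_i W A_j = A_j W A_i for all 1 ≤ i, j ≤ m. -/
/-!
Conjugating by an invertible `R` turns the symmetry of `A i * (Rᴴ * R) * A j` into commutation of
the Hermitian matrices `R * A i * Rᴴ`. If `P` diagonalizes the family by congruence, the
matrices `P * A i * Pᴴ` are diagonal, hence commute, so `Pᴴ * P` is a feasible point up to a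
positive scaling making it `≥ 1`. Conversely, a feasible `W` is positive definite, hence
`W = Rᴴ * R` with `R` invertible; the matrices `R * A i * Rᴴ` then form a commuting Hermitian
family, which a single unitary `U` diagonalizes, and `P = Uᴴ * R` works.
-/

open Matrix
open scoped ComplexOrder

theorem commute_mul_mul_star_iff {M : Type*} [Monoid M] [StarMul M] {r : M} (hr : IsUnit r)
    (a b : M) :
    Commute (r * a * star r) (r * b * star r) ↔ a * (star r * r) * b = b * (star r * r) * a := by
  have expand : ∀ x y : M,
      r * x * star r * (r * y * star r) = r * (x * (star r * r) * y) * star r :=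
    fun x y => by simp only [mul_assoc]
  rw [Commute, SemiconjBy, expand, expand, hr.star.mul_left_inj, hr.mul_right_inj]

theorem IsStrictlyPositive.exists_one_le_smul {A : Type*} [CStarAlgebra A] [PartialOrder A]
    [StarOrderedRing A] {a : A} (ha : IsStrictlyPositive a) : ∃ c : ℝ, 0 < c ∧ 1 ≤ c • a := by
  cases subsingleton_or_nontrivial A
  · exact ⟨1, one_pos, (Subsingleton.elim _ _ : (1 : A) = _).le⟩
  obtain ⟨r, hr, hra⟩ := (CFC.exists_pos_algebraMap_le_iff ha.isSelfAdjoint).2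
    fun x hx => ha.spectrum_pos hx
  refine ⟨r⁻¹, inv_pos.2 hr, ?_⟩
  calc (1 : A) = r⁻¹ • algebraMap ℝ A r := by
        rw [Algebra.algebraMap_eq_smul_one, smul_smul, inv_mul_cancel₀ hr.ne', one_smul]
    _ ≤ r⁻¹ • a := smul_le_smul_of_nonneg_left hra (inv_nonneg.2 hr.le)

open Module in
theorem LinearMap.IsSymmetric.exists_orthonormalBasis_eigenvectors_of_commute
    {𝕜 E ι κ : Type*} [RCLike 𝕜] [NormedAddCommGroup E] [InnerProductSpace 𝕜 E]
    [FiniteDimensional 𝕜 E] [Fintype κ] (hn : finrank 𝕜 E = Fintype.card κ)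
    {T : ι → E →ₗ[𝕜] E} (hT : ∀ i, (T i).IsSymmetric) (hC : Pairwise (Function.onFun Commute T)) :
    ∃ (b : OrthonormalBasis κ 𝕜 E) (μ : κ → ι → 𝕜), ∀ k i, T i (b k) = μ k i • b k := by
  classical
  let V : (ι → 𝕜) → Submodule 𝕜 E := fun χ => ⨅ i, End.eigenspace (T i) (χ i)
  have hV : DirectSum.IsInternal V := directSum_isInternal_of_pairwise_commute hT hC
  -- Only finitely many joint eigenspaces are nonzero; the basis is built subordinate to those.
  let _ := hV.submodule_iSupIndep.fintypeNeBotOfFiniteDimensional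
  have hV' := DirectSum.isInternal_ne_bot_iff.mpr hV
  have hOF := (orthogonalFamily_iInf_eigenspaces hT).comp
    (Subtype.val_injective (p := fun χ => V χ ≠ ⊥))
  refine ⟨(hV'.subordinateOrthonormalBasis hn hOF).reindex (Fintype.equivFin κ).symm,
    fun k i => (hV'.subordinateOrthonormalBasisIndex hn (Fintype.equivFin κ k) hOF).1 i,
    fun k i => ?_⟩
  have hmem := hV'.subordinateOrthonormalBasis_subordinate hn (Fintype.equivFin κ k) hOF
  rw [OrthonormalBasis.reindex_apply, Equiv.symm_symm]
  exact End.mem_eigenspace_iff.mp ((Submodule.mem_iInf _).mp hmem i)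

namespace Matrix

variable {𝕜 n : Type*} [RCLike 𝕜] [Fintype n] [DecidableEq n]

theorem IsDiag.commute {α : Type*} [CommSemiring α] {A B : Matrix n n α} (hA : A.IsDiag)
    (hB : B.IsDiag) : Commute A B := by
  rw [← hA.diagonal_diag, ← hB.diagonal_diag]
  exact commute_diagonal _ _

theorem exists_unitary_isDiag_star_mul_mul_of_commute {ι : Type*} {A : ι → Matrix n n 𝕜}
    (hA : ∀ i, (A i).IsHermitian) (hC : Pairwise (Function.onFun Commute A)) :
    ∃ U ∈ unitaryGroup n 𝕜, ∀ i, (star U * A i * U).IsDiag := by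
  obtain ⟨b, μ, hb⟩ :=
    LinearMap.IsSymmetric.exists_orthonormalBasis_eigenvectors_of_commute finrank_euclideanSpace
      (fun i => isSymmetric_toEuclideanLin_iff.mpr (hA i))
      (fun i j hij => (hC hij).map (toLpLinAlgEquiv 2 (R := 𝕜) (n := n)))
  set U := (EuclideanSpace.basisFun n 𝕜).toBasis.toMatrix b
  have hU : U ∈ unitaryGroup n 𝕜 :=
    (EuclideanSpace.basisFun n 𝕜).toMatrix_orthonormalBasis_mem_unitary b
  refine ⟨U, hU, fun i => ?_⟩
  have hAU : A i * U = U * diagonal (fun k => μ k i) := by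
    ext p l
    rw [mul_diagonal, mul_apply]
    simpa [U, Module.Basis.toMatrix_apply, toLpLin_apply, mulVec, dotProduct, mul_comm] using
      congr(WithLp.ofLp $(hb l i) p)
  rw [mul_assoc, hAU, ← mul_assoc, (mem_unitaryGroup_iff').mp hU, one_mul]
  exact isDiag_diagonal _

open scoped MatrixOrder Matrix.Norms.L2Operator

theorem PosDef.exists_posSemidef_smul_sub_one {M : Matrix n n ℂ} (hM : M.PosDef) :
    ∃ c : ℝ, 0 < c ∧ (c • M - 1).PosSemidef :=
  hM.isStrictlyPositive.exists_one_le_smul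

theorem PosDef.exists_isUnit_eq_conjTranspose_mul_self {W : Matrix n n 𝕜} (hW : W.PosDef) :
    ∃ R : Matrix n n 𝕜, IsUnit R ∧ W = Rᴴ * R :=
  CStarAlgebra.isStrictlyPositive_iff_eq_star_mul_self.mp hW.isStrictlyPositive

end Matrix

/-- Lemma 3 (Shi): a family of Hermitian matrices is simultaneously
diagonalizable by an invertible congruence `A_i ↦ P A_i P†` iff there is a
Hermitian matrix `W ≥ I` with `A_i W A_j = A_j W A_i` for all `i, j`
(a semidefinite feasibility problem). -/
theorem simultaneous_congruence_diagonalization_iff_SDP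
    {n m : ℕ} (A : Fin m → Matrix (Fin n) (Fin n) ℂ)
    (hA : ∀ i, (A i).IsHermitian) :
    (∃ P : Matrix (Fin n) (Fin n) ℂ, IsUnit P ∧
      ∀ i, (P * A i * Pᴴ).IsDiag) ↔
    (∃ W : Matrix (Fin n) (Fin n) ℂ, W.IsHermitian ∧
      (W - 1).PosSemidef ∧
      ∀ i j, A i * W * A j = A j * W * A i) := by
  constructor
  · rintro ⟨P, hP, hdiag⟩
    have hcomm : ∀ i j, A i * (Pᴴ * P) * A j = A j * (Pᴴ * P) * A i := fun i j =>
      (commute_mul_mul_star_iff hP _ _).mp ((hdiag i).commute (hdiag j))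
    obtain ⟨c, -, hW⟩ := (PosDef.conjTranspose_mul_self P
      (mulVec_injective_iff_isUnit.mpr hP)).exists_posSemidef_smul_sub_one
    refine ⟨c • (Pᴴ * P), by simpa using hW.isHermitian.add isHermitian_one, hW, fun i j => ?_⟩
    simp only [mul_smul_comm, smul_mul_assoc, hcomm i j]
  · rintro ⟨W, -, hW, hcomm⟩
    obtain ⟨R, hR, rfl⟩ := PosDef.exists_isUnit_eq_conjTranspose_mul_self
      (by simpa using PosDef.posSemidef_add hW PosDef.one)
    obtain ⟨U, hU, hdiag⟩ := exists_unitary_isDiag_star_mul_mul_of_commute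
      (fun i => isHermitian_mul_mul_conjTranspose R (hA i))
      (fun i j _ => (commute_mul_mul_star_iff hR _ _).mpr (hcomm i j))
    refine ⟨star U * R, (Unitary.isUnit_coe (U := ⟨U, hU⟩)).star.mul hR, fun i => ?_⟩
    simpa [mul_assoc, conjTranspose_mul, star_eq_conjTranspose] using hdiag i
end

section
/- Let ρ be a positive semidefinite d_A·d_B × d_A·d_B complex matrix with trace 1, viewed as a d_A × d_A block matrix with d_B × d_B blocks ρ^B_{ij}, and for a d_A × d_A matrix E define the reduced matrix Tr_A[(E ⊗ I) ρ] = Σ_{i,k} E_{i k} ρ^B_{k i}. Then ρ is classical with respect to the second party (i.e. there exist orthonormal vectors b_1, …, b_n ∈ ℂ^{d_B} and positive semidefinite d_A × d_A matrices ρ_1, …, ρ_n with ρ = Σ_{m=1}^n ρ_m ⊗ (b_m b_m†)) if and only if for every finite family (E_α)_{α} of positive semidefinite d_A × d_A matrices with Σ_α E_α = I (a POVM on the first party), the matrices Tr_A[(E_α ⊗ I) ρ] pairwise commute. -/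
/-!
If `ρ = ∑ₘ ρₘ ⊗ bₘ bₘ†` with orthonormal `bₘ`, every reduced matrix is a combination of the
pairwise commuting projections `bₘ bₘ†`. Conversely, `E ↦ Tr_A[(E ⊗ I) ρ]` is linear, and the
four-outcome POVM `(c ± H)/4c, (d ± K)/4d` shows that it sends any two Hermitian matrices, hence
any two matrices, to commuting ones. Applied to matrix units this says that the blocks `ρ^B_{ij}`
commute; since `(ρ^B_{ij})† = ρ^B_{ji}` they have a common orthonormal eigenbasis `(bₘ)`, and
`ρₘ = (I ⊗ bₘ†) ρ (I ⊗ bₘ)` is the required decomposition.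
-/

open Matrix
open scoped Kronecker ComplexOrder

/-- The reduced matrix `Tr_A[(E ⊗ I) ρ] = Σ_{i,k} E_{i k} ρ^B_{k i}`. -/
noncomputable def reduced {dA dB : ℕ} (ρ : Matrix (Fin dA × Fin dB) (Fin dA × Fin dB) ℂ)
    (E : Matrix (Fin dA) (Fin dA) ℂ) : Matrix (Fin dB) (Fin dB) ℂ :=
  ∑ i, ∑ k, E i k • blockB ρ k i

open scoped ComplexStarModule

open scoped Function in
theorem LinearMap.IsSymmetric.exists_orthonormalBasis_common_eigenvectors
    {𝕜 E ι : Type*} [RCLike 𝕜] [NormedAddCommGroup E] [InnerProductSpace 𝕜 E]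
    [FiniteDimensional 𝕜 E] {T : ι → Module.End 𝕜 E} (hT : ∀ i, (T i).IsSymmetric)
    (hC : Pairwise (Commute on T)) :
    ∃ b : OrthonormalBasis (Fin (Module.finrank 𝕜 E)) 𝕜 E,
      ∀ i m, ∃ μ : 𝕜, T i (b m) = μ • b m := by
  classical
  have hV := directSum_isInternal_of_pairwise_commute hT hC
  -- only finitely many joint eigenspaces are nonzero, and the subordinate basis needs a finite index
  let _ := hV.submodule_iSupIndep.fintypeNeBotOfFiniteDimensional
  have hW := DirectSum.isInternal_ne_bot_iff.mpr hV
  have hW' := (orthogonalFamily_iInf_eigenspaces hT).comp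
    (Subtype.val_injective (p := fun χ : ι → 𝕜 => ⨅ j, Module.End.eigenspace (T j) (χ j) ≠ ⊥))
  refine ⟨hW.subordinateOrthonormalBasis rfl hW', fun i m =>
    ⟨(hW.subordinateOrthonormalBasisIndex rfl m hW').1 i, ?_⟩⟩
  exact Module.End.mem_eigenspace_iff.mp
    (Submodule.mem_iInf _ |>.mp (hW.subordinateOrthonormalBasis_subordinate rfl m hW') i)

section StarModule

variable {A : Type*} [Ring A] [StarAddMonoid A] [Algebra ℂ A] [StarModule ℂ A] {a b : A}

theorem Commute.realPart_right (h : Commute a b) (h' : Commute a (star b)) :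
    Commute a (ℜ b : A) := by
  rw [realPart_apply_coe]
  exact (h.add_right h').smul_right _

theorem Commute.imaginaryPart_right (h : Commute a b) (h' : Commute a (star b)) :
    Commute a (ℑ b : A) := by
  rw [imaginaryPart_apply_coe]
  exact ((h.sub_right h').smul_right _).smul_right _

end StarModule

def IsOrthonormalFamily {ι n : Type*} [DecidableEq ι] [Fintype n] (b : ι → n → ℂ) : Prop :=
  ∀ k l, star (b k) ⬝ᵥ b l = if k = l then 1 else 0

def IsPOVM {n : Type*} [Fintype n] [DecidableEq n] {N : ℕ} (E : Fin N → Matrix n n ℂ) : Prop :=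
  (∀ α, (E α).PosSemidef) ∧ ∑ α, E α = 1

theorem commute_outer {ι n : Type*} [DecidableEq ι] [Fintype n] {b : ι → n → ℂ}
    (hb : IsOrthonormalFamily b) (k l : ι) : Commute (outer (b k)) (outer (b l)) := by
  obtain rfl | hkl := eq_or_ne k l
  · exact Commute.refl _
  · simp [Commute, SemiconjBy, outer, vecMulVec_mul_vecMulVec, hb k l, hb l k, hkl, hkl.symm]

namespace Matrix

variable {n : Type*} [Fintype n] [DecidableEq n]

theorem sum_outer_eq_one {b : n → n → ℂ} (hb : IsOrthonormalFamily b) :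
    ∑ m, outer (b m) = 1 := by
  let U : Matrix n n ℂ := of fun k m => b m k
  have hU : Uᴴ * U = 1 := by
    ext k l
    simpa [U, mul_apply, one_apply, dotProduct, mul_comm] using hb k l
  have hU' : U * Uᴴ = 1 := mul_eq_one_comm.mp hU
  ext k l
  simpa [U, mul_apply, outer, vecMulVec_apply, sum_apply] using congrFun (congrFun hU' k) l

theorem eq_sum_smul_outer_of_mulVec_eq_smul {b : n → n → ℂ} (hb : IsOrthonormalFamily b)
    {M : Matrix n n ℂ} (hM : ∀ m, ∃ μ : ℂ, M *ᵥ b m = μ • b m) :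
    M = ∑ m, (star (b m) ⬝ᵥ M *ᵥ b m) • outer (b m) := by
  conv_lhs => rw [← mul_one M, ← sum_outer_eq_one hb, Finset.mul_sum]
  refine Finset.sum_congr rfl fun m _ => ?_
  obtain ⟨μ, hμ⟩ := hM m
  rw [outer, mul_vecMulVec, hμ, dotProduct_smul, hb, if_pos rfl, smul_eq_mul, mul_one,
    smul_vecMulVec]

theorem exists_orthonormal_common_eigenvectors_of_isHermitian {ι : Type*}
    {A : ι → Matrix n n ℂ} (hA : ∀ i, (A i).IsHermitian) (hC : ∀ i j, Commute (A i) (A j)) :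
    ∃ b : n → n → ℂ, IsOrthonormalFamily b ∧ ∀ i m, ∃ μ : ℂ, A i *ᵥ b m = μ • b m := by
  obtain ⟨b, hb⟩ := LinearMap.IsSymmetric.exists_orthonormalBasis_common_eigenvectors
    (T := fun i => toEuclideanLin (A i)) (fun i => isSymmetric_toEuclideanLin_iff.mpr (hA i))
    (fun i j _ => (hC i j).map (toLpLinAlgEquiv 2))
  let e : n ≃ Fin (Module.finrank ℂ (EuclideanSpace ℂ n)) :=
    (Fintype.equivFin n).trans (finCongr finrank_euclideanSpace.symm)
  refine ⟨fun m => b (e m), fun k l => ?_, fun i m => ?_⟩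
  · simpa [← EuclideanSpace.inner_eq_star_dotProduct, dotProduct_comm, e.injective.eq_iff] using
      orthonormal_iff_ite.mp b.orthonormal (e k) (e l)
  · obtain ⟨μ, hμ⟩ := hb i (e m)
    exact ⟨μ, congrArg WithLp.ofLp hμ⟩

/-- The Hermitian matrices `ℜ Aᵢ` and `ℑ Aᵢ` commute pairwise, so they have a common
orthonormal eigenbasis, and `Aᵢ = ℜ Aᵢ + i ℑ Aᵢ`. -/
theorem exists_orthonormal_common_eigenvectors_of_commute_star {ι : Type*}
    {A : ι → Matrix n n ℂ} (hC : ∀ i j, Commute (A i) (A j))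
    (hCstar : ∀ i j, Commute (A i) (star (A j))) :
    ∃ b : n → n → ℂ, IsOrthonormalFamily b ∧ ∀ i m, ∃ μ : ℂ, A i *ᵥ b m = μ • b m := by
  let P : ι ⊕ ι → Matrix n n ℂ := Sum.elim (fun i => ℜ (A i)) (fun i => ℑ (A i))
  have hP : ∀ x p, (∀ i, Commute x (A i) ∧ Commute x (star (A i))) → Commute x (P p) := by
    rintro x (i | i) hx
    exacts [(hx i).1.realPart_right (hx i).2, (hx i).1.imaginaryPart_right (hx i).2]
  have hPC : ∀ p q, Commute (P p) (P q) := fun p q =>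
    hP _ q fun i => ⟨(hP _ p fun j => ⟨hC i j, hCstar i j⟩).symm,
      (hP _ p fun j => ⟨(hCstar j i).symm, (hC i j).star_star⟩).symm⟩
  have hPH : ∀ p, (P p).IsHermitian := by
    rintro (i | i)
    exacts [(ℜ (A i)).2.isHermitian, (ℑ (A i)).2.isHermitian]
  obtain ⟨b, hb, heig⟩ := exists_orthonormal_common_eigenvectors_of_isHermitian hPH hPC
  refine ⟨b, hb, fun i m => ?_⟩
  obtain ⟨μ, hμ⟩ := heig (.inl i) m
  obtain ⟨ν, hν⟩ := heig (.inr i) m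
  refine ⟨μ + Complex.I * ν, ?_⟩
  simp only [P, Sum.elim_inl, Sum.elim_inr] at hμ hν
  rw [← realPart_add_I_smul_imaginaryPart (A i), add_mulVec, smul_mulVec, hμ, hν, add_smul,
    smul_smul]

open scoped Matrix.Norms.L2Operator MatrixOrder in
theorem IsHermitian.exists_posSemidef_smul_one_add_and_sub {H : Matrix n n ℂ}
    (hH : H.IsHermitian) :
    ∃ c : ℝ, 0 < c ∧ (c • 1 + H).PosSemidef ∧ (c • 1 - H).PosSemidef := by
  have hadd : (‖H‖ • 1 + H).PosSemidef := by
    simpa [← Algebra.algebraMap_eq_smul_one, add_comm] using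
      le_iff.mp hH.isSelfAdjoint.neg_algebraMap_norm_le_self
  have hsub : (‖H‖ • 1 - H).PosSemidef := by
    simpa [← Algebra.algebraMap_eq_smul_one] using
      le_iff.mp hH.isSelfAdjoint.le_algebraMap_norm_self
  refine ⟨‖H‖ + 1, by positivity, ?_, ?_⟩
  · simpa [add_smul, add_right_comm] using hadd.add PosSemidef.one
  · simpa [add_smul, sub_add_eq_add_sub] using hsub.add PosSemidef.one

end Matrix

namespace LinearMap

variable {n A : Type*} [Fintype n] [DecidableEq n] [Ring A] [Algebra ℂ A]
  (f : Matrix n n ℂ →ₗ[ℂ] A)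
  (hf : ∀ (N : ℕ) (E : Fin N → Matrix n n ℂ), IsPOVM E → ∀ α β, Commute (f (E α)) (f (E β)))
include hf

theorem commute_apply_of_isHermitian {H K : Matrix n n ℂ} (hH : H.IsHermitian)
    (hK : K.IsHermitian) : Commute (f H) (f K) := by
  obtain ⟨c, hc, hHadd, hHsub⟩ := hH.exists_posSemidef_smul_one_add_and_sub
  obtain ⟨d, hd, hKadd, hKsub⟩ := hK.exists_posSemidef_smul_one_add_and_sub
  let E : Fin 4 → Matrix n n ℂ := ![(4 * c)⁻¹ • (c • 1 + H), (4 * c)⁻¹ • (c • 1 - H),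
    (4 * d)⁻¹ • (d • 1 + K), (4 * d)⁻¹ • (d • 1 - K)]
  have hpair : ∀ (r : ℝ) (X : Matrix n n ℂ), 0 < r →
      (4 * r)⁻¹ • (r • 1 + X) + (4 * r)⁻¹ • (r • 1 - X) = (2⁻¹ : ℝ) • (1 : Matrix n n ℂ) := by
    intro r X hr
    rw [← smul_add, add_add_sub_cancel, ← two_smul ℝ, smul_smul, smul_smul]
    congr 1
    field_simp
    norm_num
  have hE : IsPOVM E := by
    refine ⟨fun α => ?_, ?_⟩
    · fin_cases α
      exacts [hHadd.smul (by positivity), hHsub.smul (by positivity),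
        hKadd.smul (by positivity), hKsub.smul (by positivity)]
    · simp only [Fin.sum_univ_four, E, Matrix.cons_val]
      rw [add_assoc, hpair c H hc, hpair d K hd, ← add_smul]
      norm_num
  have hdiff : ∀ (r : ℝ) (X : Matrix n n ℂ), 0 < r →
      f ((4 * r)⁻¹ • (r • 1 + X)) - f ((4 * r)⁻¹ • (r • 1 - X)) = (2 * r)⁻¹ • f X := by
    intro r X hr
    rw [← map_sub, ← LinearMap.map_smul_of_tower]
    congr 1
    module
  have hcomm := ((hf 4 E hE 0 2).sub_right (hf 4 E hE 0 3)).sub_left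
    ((hf 4 E hE 1 2).sub_right (hf 4 E hE 1 3))
  simp only [E, Matrix.cons_val, hdiff c H hc, hdiff d K hd] at hcomm
  rwa [Commute.smul_left_iff₀ (by positivity), Commute.smul_right_iff₀ (by positivity)] at hcomm

theorem commute_apply (G G' : Matrix n n ℂ) : Commute (f G) (f G') := by
  have h : ∀ X Y : selfAdjoint (Matrix n n ℂ), Commute (f X) (f Y) := fun X Y =>
    f.commute_apply_of_isHermitian hf X.2.isHermitian Y.2.isHermitian
  rw [← realPart_add_I_smul_imaginaryPart G, ← realPart_add_I_smul_imaginaryPart G', map_add,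
    map_add, map_smul, map_smul]
  exact ((h _ _).add_right ((h _ _).smul_right _)).add_left
    (((h _ _).add_right ((h _ _).smul_right _)).smul_left _)

end LinearMap

section Bipartite

variable {dA dB : ℕ}

@[simps]
noncomputable def reducedLinearMap (ρ : Matrix (Fin dA × Fin dB) (Fin dA × Fin dB) ℂ) :
    Matrix (Fin dA) (Fin dA) ℂ →ₗ[ℂ] Matrix (Fin dB) (Fin dB) ℂ where
  toFun := reduced ρ
  map_add' E F := by simp [reduced, add_smul, Finset.sum_add_distrib]
  map_smul' c E := by simp [reduced, Finset.smul_sum, smul_smul]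

theorem reduced_single (ρ : Matrix (Fin dA × Fin dB) (Fin dA × Fin dB) ℂ) (i k : Fin dA) :
    reduced ρ (single i k 1) = blockB ρ k i := by
  simp [reduced, single_apply, ite_and]

theorem blockB_conjTranspose {ρ : Matrix (Fin dA × Fin dB) (Fin dA × Fin dB) ℂ}
    (hρ : ρ.IsHermitian) (i j : Fin dA) : (blockB ρ i j)ᴴ = blockB ρ j i := by
  ext k l
  simpa [blockB] using congrFun (congrFun hρ.eq (j, k)) (i, l)

theorem reduced_sum_kronecker {ι : Type*} [Fintype ι] (X : ι → Matrix (Fin dA) (Fin dA) ℂ)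
    (Y : ι → Matrix (Fin dB) (Fin dB) ℂ) (E : Matrix (Fin dA) (Fin dA) ℂ) :
    reduced (∑ m, X m ⊗ₖ Y m) E = ∑ m, (E * X m).trace • Y m := by
  ext k l
  simp only [reduced, blockB, Matrix.sum_apply, Matrix.smul_apply, of_apply, kroneckerMap_apply,
    trace, diag_apply, mul_apply, smul_eq_mul, Finset.mul_sum, Finset.sum_mul]
  rw [Finset.sum_comm_cycle]
  simp only [mul_assoc]

theorem commute_reduced_sum_kronecker_outer {ι : Type*} [Fintype ι] [DecidableEq ι]
    {b : ι → Fin dB → ℂ} (hb : IsOrthonormalFamily b) (X : ι → Matrix (Fin dA) (Fin dA) ℂ)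
    (E F : Matrix (Fin dA) (Fin dA) ℂ) :
    Commute (reduced (∑ m, X m ⊗ₖ outer (b m)) E) (reduced (∑ m, X m ⊗ₖ outer (b m)) F) := by
  rw [reduced_sum_kronecker, reduced_sum_kronecker]
  exact Commute.sum_left _ _ _ fun k _ => Commute.sum_right _ _ _ fun l _ =>
    ((commute_outer hb k l).smul_left _).smul_right _

/-- `(I ⊗ v†) ρ (I ⊗ v)`. -/
def compressB (ρ : Matrix (Fin dA × Fin dB) (Fin dA × Fin dB) ℂ) (v : Fin dB → ℂ) :
    Matrix (Fin dA) (Fin dA) ℂ :=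
  of fun i j => star v ⬝ᵥ blockB ρ i j *ᵥ v

theorem posSemidef_compressB {ρ : Matrix (Fin dA × Fin dB) (Fin dA × Fin dB) ℂ}
    (hρ : ρ.PosSemidef) (v : Fin dB → ℂ) : (compressB ρ v).PosSemidef := by
  let V : Matrix (Fin dA × Fin dB) (Fin dA) ℂ := of fun p j => if p.1 = j then v p.2 else 0
  have hV : compressB ρ v = Vᴴ * ρ * V := by
    ext i j
    simp [compressB, blockB, V, mul_apply, dotProduct, mulVec, Fintype.sum_prod_type,
      Finset.mul_sum, Finset.sum_mul, mul_assoc, apply_ite (starRingEnd ℂ), ite_mul]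
    exact Finset.sum_comm
  rw [hV]
  exact hρ.conjTranspose_mul_mul_same V

theorem eq_sum_compressB_kronecker_outer {ρ : Matrix (Fin dA × Fin dB) (Fin dA × Fin dB) ℂ}
    {b : Fin dB → Fin dB → ℂ} (hb : IsOrthonormalFamily b)
    (heig : ∀ i j m, ∃ μ : ℂ, blockB ρ i j *ᵥ b m = μ • b m) :
    ρ = ∑ m, compressB ρ (b m) ⊗ₖ outer (b m) := by
  ext ⟨i, k⟩ ⟨j, l⟩
  simpa [blockB, compressB, Matrix.sum_apply, kroneckerMap_apply] using
    congrFun (congrFun (eq_sum_smul_outer_of_mulVec_eq_smul hb (heig i j)) k) l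

end Bipartite

theorem classical_iff_reduced_states_commute_general
    {dA dB : ℕ}
    (ρ : Matrix (Fin dA × Fin dB) (Fin dA × Fin dB) ℂ)
    (hρ : ρ.PosSemidef) :
    (∃ (n : ℕ) (b : Fin n → (Fin dB → ℂ))
        (ρm : Fin n → Matrix (Fin dA) (Fin dA) ℂ),
      (∀ k l, star (b k) ⬝ᵥ b l = if k = l then 1 else 0) ∧
      (∀ m, (ρm m).PosSemidef) ∧
      ρ = ∑ m, ρm m ⊗ₖ outer (b m)) ↔
    (∀ (N : ℕ) (E : Fin N → Matrix (Fin dA) (Fin dA) ℂ),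
      (∀ α, (E α).PosSemidef) → (∑ α, E α = 1) →
      ∀ α β, Commute (reduced ρ (E α)) (reduced ρ (E β))) := by
  constructor
  · rintro ⟨n, b, ρm, hb, -, rfl⟩ N E - - α β
    exact commute_reduced_sum_kronecker_outer hb ρm (E α) (E β)
  · intro h
    have hall := (reducedLinearMap ρ).commute_apply fun N E hE => h N E hE.1 hE.2
    have hblk : ∀ i j k l, Commute (blockB ρ i j) (blockB ρ k l) := fun i j k l => by
      simpa [reduced_single] using hall (single j i 1) (single l k 1)
    obtain ⟨b, hb, heig⟩ := exists_orthonormal_common_eigenvectors_of_commute_star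
      (A := fun p : Fin dA × Fin dA => blockB ρ p.1 p.2) (fun p q => hblk _ _ _ _)
      (fun p q => by simpa [star_eq_conjTranspose, blockB_conjTranspose hρ.1] using hblk _ _ _ _)
    exact ⟨dB, b, fun m => compressB ρ (b m), hb, fun m => posSemidef_compressB hρ (b m),
      eq_sum_compressB_kronecker_outer hb fun i j m => heig (i, j) m⟩

/-- Theorem 2, bipartite case: a state is classical with respect to the second
party iff for every POVM on the first party the reduced states after the
measurement pairwise commute. -/
theorem classical_iff_reduced_states_commute
    {dA dB : ℕ}
    (ρ : Matrix (Fin dA × Fin dB) (Fin dA × Fin dB) ℂ)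
    (hρ : ρ.PosSemidef) (htr : ρ.trace = 1) :
    (∃ (n : ℕ) (b : Fin n → (Fin dB → ℂ))
        (ρm : Fin n → Matrix (Fin dA) (Fin dA) ℂ),
      (∀ k l, star (b k) ⬝ᵥ b l = if k = l then 1 else 0) ∧
      (∀ m, (ρm m).PosSemidef) ∧
      ρ = ∑ m, ρm m ⊗ₖ outer (b m)) ↔
    (∀ (N : ℕ) (E : Fin N → Matrix (Fin dA) (Fin dA) ℂ),
      (∀ α, (E α).PosSemidef) → (∑ α, E α = 1) →
      ∀ α β, Commute (reduced ρ (E α)) (reduced ρ (E β))) :=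
  classical_iff_reduced_states_commute_general ρ hρ
end

section
/- Let b_1, …, b_n be unit vectors in ℂ^d. Then the following are equivalent: (1) the vectors b_1, …, b_n are linearly independent; (2) there exist a real number λ with 0 < λ ≤ 1 and d × d complex matrices M_1, …, M_n such that I − Σ_{i=1}^n M_i† M_i is positive semidefinite and M_i (b_j b_j†) M_i† = λ · δ_{ij} · (b_j b_j†) for all i, j. -/
/-! If `b` is linearly independent, a dual family `f i` with `f i (b j) = δᵢⱼ` gives the rank-one
matrices `A i = b i (f i)`, which send `b j` to `δᵢⱼ b i`; rescaling them by `√λ` for `λ` small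
compared with the norm of `∑ (A i)ᴴ A i` makes `∑ (M i)ᴴ M i ≤ 1`. Conversely,
`M i (b j b jᴴ) (M i)ᴴ = (M i b j)(M i b j)ᴴ` vanishes exactly when `M i b j` does, so `M i` kills
every `b j` with `j ≠ i` but not `b i`, and applying `M i` to a vanishing linear combination of
the `b j` shows that its `i`-th coefficient is zero. -/

open Matrix
open scoped ComplexOrder

section LinearIndependent

variable {K V ι : Type*} [Field K] [AddCommGroup V] [Module K V]

theorem LinearIndependent.of_pairwise_map_eq_zero {W : Type*} [AddCommGroup W] [Module K W]
    (v : ι → V) (f : ι → V →ₗ[K] W)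
    (hoff : Pairwise fun i j ↦ f i (v j) = 0) (hdiag : ∀ i, f i (v i) ≠ 0) :
    LinearIndependent K v := by
  refine linearIndependent_iff'.mpr fun s g hrel i hi ↦ ?_
  have hsum : ∑ j ∈ s, g j • f i (v j) = g i • f i (v i) :=
    s.sum_eq_single_of_mem i hi fun j _ hji ↦ by rw [hoff hji.symm, smul_zero]
  have hrel_i := congr_arg (f i) hrel
  rw [map_sum] at hrel_i
  simp only [map_smul, hsum, map_zero, smul_eq_zero] at hrel_i
  exact hrel_i.resolve_right (hdiag i)

theorem LinearIndependent.exists_dual_eq_ite [DecidableEq ι] {v : ι → V}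
    (hv : LinearIndependent K v) :
    ∃ f : ι → Module.Dual K V, ∀ i j, f i (v j) = if i = j then 1 else 0 := by
  let B := Module.Basis.span hv
  choose f hf using fun i ↦ LinearMap.exists_extend (B.coord i)
  refine ⟨f, fun i j ↦ ?_⟩
  have : f i (v j) = B.coord i (B j) := by
    rw [← hf, LinearMap.comp_apply, Submodule.subtype_apply, Module.Basis.span_apply]
  rw [this, Module.Basis.coord_apply, Module.Basis.repr_self, Finsupp.single_apply]
  exact if_congr eq_comm rfl rfl

end LinearIndependent

section HermitianBound

open scoped Matrix.Norms.L2Operator MatrixOrder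


theorem Matrix.IsHermitian.exists_posSemidef_one_sub_smul {n : Type*} [Fintype n] [DecidableEq n]
    {P : Matrix n n ℂ} (hP : P.IsHermitian) :
    ∃ lam : ℝ, 0 < lam ∧ lam ≤ 1 ∧ (1 - lam • P).PosSemidef := by
  have hle : P ≤ ‖P‖ • 1 := by
    simpa [Algebra.algebraMap_eq_smul_one] using IsSelfAdjoint.le_algebraMap_norm_self hP
  refine ⟨(1 + ‖P‖)⁻¹, by positivity, inv_le_one_of_one_le₀ (by simp), ?_⟩
  have : 1 - (1 + ‖P‖)⁻¹ • P = (1 + ‖P‖)⁻¹ • (1 + (‖P‖ • 1 - P)) := by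
    match_scalars <;> field_simp
  rw [this]
  exact (PosSemidef.one.add (le_iff.mp hle)).smul (by positivity)

end HermitianBound

theorem mul_outer_mul_conjTranspose {m n : Type*} [Fintype n] (M : Matrix m n ℂ) (v : n → ℂ) :
    M * outer v * Mᴴ = outer (M *ᵥ v) := by
  rw [outer, mul_vecMulVec, vecMulVec_mul, ← star_mulVec]
  rfl

theorem outer_eq_zero_iff {n : Type*} {v : n → ℂ} : outer v = 0 ↔ v = 0 := by
  simp [outer]

theorem outer_smul {n : Type*} (c : ℂ) (v : n → ℂ) : outer (c • v) = (c * star c) • outer v := by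
  rw [outer, star_smul, smul_vecMulVec, vecMulVec_smul, smul_smul, outer]

theorem exists_unambiguous_measurement_of_mulVec_eq_ite {ι n : Type*} [Fintype ι] [DecidableEq ι]
    [Fintype n] [DecidableEq n] {b : ι → n → ℂ} (A : ι → Matrix n n ℂ)
    (hA : ∀ i j, A i *ᵥ b j = if i = j then b i else 0) :
    ∃ lam : ℝ, 0 < lam ∧ lam ≤ 1 ∧ ∃ M : ι → Matrix n n ℂ,
      (1 - ∑ i, (M i)ᴴ * M i).PosSemidef ∧
      ∀ i j, M i * outer (b j) * (M i)ᴴ = (if i = j then (lam : ℂ) else 0) • outer (b j) := by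
  have hherm : (∑ i, (A i)ᴴ * A i).IsHermitian :=
    isSelfAdjoint_sum _ fun i _ ↦ isHermitian_conjTranspose_mul_self (A i)
  obtain ⟨lam, hlam0, hlam1, hpsd⟩ := hherm.exists_posSemidef_one_sub_smul
  have hsqrt : (√lam : ℂ) * star (√lam : ℂ) = lam := by
    rw [Complex.star_def, Complex.conj_ofReal, ← Complex.ofReal_mul, Real.mul_self_sqrt hlam0.le]
  refine ⟨lam, hlam0, hlam1, fun i ↦ (√lam : ℂ) • A i, ?_, fun i j ↦ ?_⟩
  · convert hpsd using 2
    rw [Finset.smul_sum]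
    refine Finset.sum_congr rfl fun i _ ↦ ?_
    rw [conjTranspose_smul, smul_mul_smul_comm, mul_comm, hsqrt, Complex.coe_smul]
  · rw [mul_outer_mul_conjTranspose, smul_mulVec, hA]
    split_ifs with hij
    · rw [hij, outer_smul, hsqrt]
    · rw [smul_zero, outer_eq_zero_iff.mpr rfl, zero_smul]

/-- NDLID by a generalized measurement: unit vectors `b_1, …, b_n` admit a
generalized measurement unambiguously discriminating them with success rate
`0 < λ ≤ 1` iff they are linearly independent. -/
theorem NDLID_iff_linearIndependent
    {d n : ℕ} (b : Fin n → (Fin d → ℂ))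
    (hunit : ∀ i, star (b i) ⬝ᵥ b i = 1) :
    LinearIndependent ℂ b ↔
    (∃ (lam : ℝ), 0 < lam ∧ lam ≤ 1 ∧
      ∃ M : Fin n → Matrix (Fin d) (Fin d) ℂ,
        ((1 : Matrix (Fin d) (Fin d) ℂ) - ∑ i, (M i)ᴴ * M i).PosSemidef ∧
        ∀ i j, M i * outer (b j) * (M i)ᴴ =
          (if i = j then (lam : ℂ) else 0) • outer (b j)) := by
  constructor
  · intro hb
    obtain ⟨f, hf⟩ := hb.exists_dual_eq_ite
    refine exists_unambiguous_measurement_of_mulVec_eq_ite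
      (fun i ↦ LinearMap.toMatrix' ((f i).smulRight (b i))) fun i j ↦ ?_
    rw [LinearMap.toMatrix'_mulVec, LinearMap.smulRight_apply, hf, ite_smul, one_smul, zero_smul]
  · rintro ⟨lam, hlam, -, M, -, hM⟩
    have hM_mulVec : ∀ i j, outer (M i *ᵥ b j) = (if i = j then (lam : ℂ) else 0) • outer (b j) :=
      fun i j ↦ by rw [← mul_outer_mul_conjTranspose, hM]
    refine LinearIndependent.of_pairwise_map_eq_zero b (fun i ↦ (M i).mulVecLin) (fun i j hij ↦ ?_)
      fun i ↦ ?_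
    · show M i *ᵥ b j = 0
      rw [← outer_eq_zero_iff, hM_mulVec, if_neg hij, zero_smul]
    · have hb : b i ≠ 0 := fun h ↦ by simpa [h] using hunit i
      rw [mulVecLin_apply, Ne, ← outer_eq_zero_iff, hM_mulVec, if_pos rfl, smul_eq_zero,
        outer_eq_zero_iff]
      simp [hlam.ne', hb]
end
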